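/- Let (H,α) be a monoidal Hom-Hopf algebra, (A,β) a right (H,α)-Hom-comodule algebra, and θ:H⊗H→A a normalized (A,β)-integral. For each relative Hom-Hopf module (M,μ) define ν_M:M⊗H→M by ν_M(m⊗h) = μ(m_(0))·θ(m_(1)⊗α⁻¹(h)). Then: (i) ν_M(μ(m)⊗α(h))=μ(ν_M(m⊗h)); (ii) ν_M is right (A,β)-linear: ν_M(m·a_(0)⊗ha_(1)) = ν_M(m⊗h)·a; (iii) ν_M is right (H,α)-colinear for the coaction ρ(m⊗h)=(μ⁻¹(m)⊗h_(1))⊗α(h_(2)) on M⊗H: ρ_M(ν_M(m⊗h)) = ν_M(μ⁻¹(m)⊗h_(1))⊗α(h_(2)); (iv) ν_M∘ρ_M = id_M; and (v) ν is natural: for every morphism f:(M,μ)→(N,ν') of relative Hom-Hopf modules, ν_N∘(f⊗id_H) = f∘ν_M. -/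

import Mathlib

/- Preliminaries: monoidal Hom-structures (Caenepeel–Goyvaerts style), following the paper. -/

open TensorProduct

noncomputable section

universe u v

/-- A monoidal Hom-algebra `(A, β)`. -/
structure HomAlgebra (k : Type v) (A : Type u) [CommRing k] [AddCommGroup A] [Module k A] where
  aut : A ≃ₗ[k] A
  mul : A →ₗ[k] A →ₗ[k] A
  one : A
  aut_mul : ∀ a b : A, aut (mul a b) = mul (aut a) (aut b)
  aut_one : aut one = one
  hom_assoc : ∀ a b c : A, mul (aut a) (mul b c) = mul (mul a b) (aut c)
  one_mul : ∀ a : A, mul one a = aut a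
  mul_one : ∀ a : A, mul a one = aut a

/-- The bilinear map on tensor products induced by two bilinear maps:
`(m ⊗ n, p ⊗ q) ↦ f m p ⊗ g n q`. -/
def biTensor {k : Type v} [CommRing k] {M N P Q R S : Type*}
    [AddCommGroup M] [Module k M] [AddCommGroup N] [Module k N]
    [AddCommGroup P] [Module k P] [AddCommGroup Q] [Module k Q]
    [AddCommGroup R] [Module k R] [AddCommGroup S] [Module k S]
    (f : M →ₗ[k] P →ₗ[k] R) (g : N →ₗ[k] Q →ₗ[k] S) :
    M ⊗[k] N →ₗ[k] P ⊗[k] Q →ₗ[k] R ⊗[k] S :=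
  (TensorProduct.homTensorHomMap (RingHom.id k) P Q R S).comp (TensorProduct.map f g)

/-- A monoidal Hom-Hopf algebra `(H, α, S)`. -/
structure HomHopfAlgebra (k : Type v) (H : Type u) [CommRing k] [AddCommGroup H] [Module k H]
    extends HomAlgebra k H where
  comul : H →ₗ[k] H ⊗[k] H
  counit : H →ₗ[k] k
  comul_aut : ∀ h, comul (aut h) = TensorProduct.map aut.toLinearMap aut.toLinearMap (comul h)
  counit_aut : ∀ h, counit (aut h) = counit h
  hom_coassoc : ∀ h, TensorProduct.map aut.symm.toLinearMap comul (comul h)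
      = TensorProduct.assoc k H H H (TensorProduct.map comul aut.toLinearMap (comul h))
  counit_comul_left : ∀ h,
      TensorProduct.lid k H (TensorProduct.map counit LinearMap.id (comul h)) = aut.symm h
  counit_comul_right : ∀ h,
      TensorProduct.rid k H (TensorProduct.map LinearMap.id counit (comul h)) = aut.symm h
  comul_mul : ∀ a b, comul (mul a b) = biTensor mul mul (comul a) (comul b)
  comul_one : comul one = one ⊗ₜ[k] one
  counit_mul : ∀ a b, counit (mul a b) = counit a * counit b
  counit_one : counit one = 1
  antipode : H →ₗ[k] H
  antipode_convolution : ∀ h,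
      TensorProduct.lift mul (TensorProduct.map antipode LinearMap.id (comul h)) = counit h • one
  convolution_antipode : ∀ h,
      TensorProduct.lift mul (TensorProduct.map LinearMap.id antipode (comul h)) = counit h • one
  antipode_aut : ∀ h, antipode (aut h) = aut (antipode h)

variable {k : Type v} [CommRing k]
variable {H : Type u} [AddCommGroup H] [Module k H]
variable {A : Type u} [AddCommGroup A] [Module k A]

/-- A right `(A, β)`-Hom-module `(M, μ)`. -/
structure HomModule (k : Type v) {A : Type u} [CommRing k] [AddCommGroup A] [Module k A]
    (Aa : HomAlgebra k A) (M : Type u) [AddCommGroup M] [Module k M] where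
  aut : M ≃ₗ[k] M
  act : M →ₗ[k] A →ₗ[k] M
  act_act : ∀ (m : M) (a b : A), act (act m a) (Aa.aut b) = act (aut m) (Aa.mul a b)
  act_one : ∀ m : M, act m Aa.one = aut m
  aut_act : ∀ (m : M) (a : A), aut (act m a) = act (aut m) (Aa.aut a)

/-- A right `(H, α)`-Hom-comodule `(M, μ)`. -/
structure HomComodule (k : Type v) {H : Type u} [CommRing k] [AddCommGroup H] [Module k H]
    (Hh : HomHopfAlgebra k H) (M : Type u) [AddCommGroup M] [Module k M] where
  aut : M ≃ₗ[k] M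
  coact : M →ₗ[k] M ⊗[k] H
  coact_aut : ∀ m, coact (aut m) = TensorProduct.map aut.toLinearMap Hh.aut.toLinearMap (coact m)
  counit_coact : ∀ m,
      TensorProduct.rid k M (TensorProduct.map LinearMap.id Hh.counit (coact m)) = aut.symm m
  hom_coassoc : ∀ m,
      TensorProduct.assoc k M H H (TensorProduct.map coact Hh.aut.symm.toLinearMap (coact m))
        = TensorProduct.map aut.symm.toLinearMap Hh.comul (coact m)

/-- A right `(H, α)`-Hom-comodule algebra `(A, β)`. -/
structure HomComoduleAlgebra (k : Type v) {H : Type u} [CommRing k] [AddCommGroup H] [Module k H]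
    (Hh : HomHopfAlgebra k H) (A : Type u) [AddCommGroup A] [Module k A]
    extends HomAlgebra k A where
  coact : A →ₗ[k] A ⊗[k] H
  coact_aut : ∀ a, coact (aut a) = TensorProduct.map aut.toLinearMap Hh.aut.toLinearMap (coact a)
  counit_coact : ∀ a,
      TensorProduct.rid k A (TensorProduct.map LinearMap.id Hh.counit (coact a)) = aut.symm a
  hom_coassoc : ∀ a,
      TensorProduct.assoc k A H H (TensorProduct.map coact Hh.aut.symm.toLinearMap (coact a))
        = TensorProduct.map aut.symm.toLinearMap Hh.comul (coact a)
  coact_mul : ∀ a b, coact (mul a b) = biTensor mul Hh.mul (coact a) (coact b)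
  coact_one : coact one = one ⊗ₜ[k] Hh.one

/-- A relative Hom-Hopf module `(M, μ)`. -/
structure RelHopfModule (k : Type v) {H A : Type u} [CommRing k]
    [AddCommGroup H] [Module k H] [AddCommGroup A] [Module k A]
    (Hh : HomHopfAlgebra k H) (AA : HomComoduleAlgebra k Hh A)
    (M : Type u) [AddCommGroup M] [Module k M] where
  aut : M ≃ₗ[k] M
  act : M →ₗ[k] A →ₗ[k] M
  act_act : ∀ (m : M) (a b : A), act (act m a) (AA.aut b) = act (aut m) (AA.mul a b)
  act_one : ∀ m : M, act m AA.one = aut m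
  aut_act : ∀ (m : M) (a : A), aut (act m a) = act (aut m) (AA.aut a)
  coact : M →ₗ[k] M ⊗[k] H
  coact_aut : ∀ m, coact (aut m) = TensorProduct.map aut.toLinearMap Hh.aut.toLinearMap (coact m)
  counit_coact : ∀ m,
      TensorProduct.rid k M (TensorProduct.map LinearMap.id Hh.counit (coact m)) = aut.symm m
  hom_coassoc : ∀ m,
      TensorProduct.assoc k M H H (TensorProduct.map coact Hh.aut.symm.toLinearMap (coact m))
        = TensorProduct.map aut.symm.toLinearMap Hh.comul (coact m)
  compat : ∀ (m : M) (a : A), coact (act m a) = biTensor act Hh.mul (coact m) (AA.coact a)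

/-- The underlying Hom-module of a relative Hom-Hopf module. -/
def RelHopfModule.toHomModule {Hh : HomHopfAlgebra k H} {AA : HomComoduleAlgebra k Hh A}
    {M : Type u} [AddCommGroup M] [Module k M] (T : RelHopfModule k Hh AA M) :
    HomModule k AA.toHomAlgebra M :=
  ⟨T.aut, T.act, T.act_act, T.act_one, T.aut_act⟩

/-- The underlying Hom-comodule of a relative Hom-Hopf module. -/
def RelHopfModule.toHomComodule {Hh : HomHopfAlgebra k H} {AA : HomComoduleAlgebra k Hh A}
    {M : Type u} [AddCommGroup M] [Module k M] (T : RelHopfModule k Hh AA M) :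
    HomComodule k Hh M :=
  ⟨T.aut, T.coact, T.coact_aut, T.counit_coact, T.hom_coassoc⟩

/-- A total integral `φ : (H, α) → (A, β)`. -/
structure TotalIntegral (k : Type v) {H A : Type u} [CommRing k]
    [AddCommGroup H] [Module k H] [AddCommGroup A] [Module k A]
    (Hh : HomHopfAlgebra k H) (AA : HomComoduleAlgebra k Hh A) where
  toFun : H →ₗ[k] A
  colinear : ∀ h, AA.coact (toFun h) = TensorProduct.map toFun LinearMap.id (Hh.comul h)
  commutes : ∀ h, toFun (Hh.aut h) = AA.aut (toFun h)
  normal : toFun Hh.one = AA.one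

/-- The `(A, β)`-action on `M ⊗ H` of the right adjoint `G`:
`(m ⊗ h) · a = m · a₍₀₎ ⊗ h a₍₁₎`. -/
def Gact {M : Type u} [AddCommGroup M] [Module k M]
    (Hh : HomHopfAlgebra k H) (AA : HomComoduleAlgebra k Hh A)
    (act : M →ₗ[k] A →ₗ[k] M) : (M ⊗[k] H) →ₗ[k] A →ₗ[k] (M ⊗[k] H) :=
  (biTensor act Hh.mul).compl₂ AA.coact

/-- The `(H, α)`-coaction on `M ⊗ H` of the right adjoint `G`:
`ρ(m ⊗ h) = (μ⁻¹(m) ⊗ h₍₁₎) ⊗ α(h₍₂₎)`. -/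
def Gcoact {M : Type u} [AddCommGroup M] [Module k M]
    (Hh : HomHopfAlgebra k H) (autM : M ≃ₗ[k] M) :
    M ⊗[k] H →ₗ[k] (M ⊗[k] H) ⊗[k] H :=
  ((TensorProduct.assoc k M H H).symm.toLinearMap).comp
    (TensorProduct.map autM.symm.toLinearMap
      ((TensorProduct.map LinearMap.id Hh.aut.toLinearMap).comp Hh.comul))

/-- The counit of the adjunction: `δ(n ⊗ h) = ε(h) n`. -/
def Gcounit (Hh : HomHopfAlgebra k H) (N : Type u) [AddCommGroup N] [Module k N] :
    N ⊗[k] H →ₗ[k] N :=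
  (TensorProduct.rid k N).toLinearMap.comp (TensorProduct.map LinearMap.id Hh.counit)

/-- The map `λ_M : M ⊗ H → M`, `λ_M(m ⊗ h) = μ⁻¹(m₍₀₎) · φ(S(m₍₁₎) α(h))`. -/
def lamMap {M : Type u} [AddCommGroup M] [Module k M]
    {Hh : HomHopfAlgebra k H} {AA : HomComoduleAlgebra k Hh A}
    (φ : H →ₗ[k] A) (T : RelHopfModule k Hh AA M) : M ⊗[k] H →ₗ[k] M :=
  (TensorProduct.lift T.act).comp
    ((TensorProduct.map T.aut.symm.toLinearMap
        (φ.comp ((TensorProduct.lift Hh.mul).comp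
          (TensorProduct.map Hh.antipode Hh.aut.toLinearMap)))).comp
      (((TensorProduct.assoc k M H H).toLinearMap).comp
        (TensorProduct.map T.coact LinearMap.id)))

/-- The trace map `m ↦ m₍₀₎ · φ(S(m₍₁₎))` (for any Hom-action `act` and Hom-coaction `coact`). -/
def traceMap {M : Type u} [AddCommGroup M] [Module k M]
    (S : H →ₗ[k] H) (φ : H →ₗ[k] A)
    (act : M →ₗ[k] A →ₗ[k] M) (coact : M →ₗ[k] M ⊗[k] H) : M →ₗ[k] M :=
  (TensorProduct.lift act).comp
    ((TensorProduct.map LinearMap.id (φ.comp S)).comp coact)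

/-- A normalized `(A, β)`-integral `θ : H ⊗ H → A`. -/
structure NormalizedIntegral (k : Type v) {H A : Type u} [CommRing k]
    [AddCommGroup H] [Module k H] [AddCommGroup A] [Module k A]
    (Hh : HomHopfAlgebra k H) (AA : HomComoduleAlgebra k Hh A) where
  θ : H ⊗[k] H →ₗ[k] A
  commutes : ∀ x, θ (TensorProduct.map Hh.aut.toLinearMap Hh.aut.toLinearMap x) = AA.aut (θ x)
  /-- `θ(α⁻¹(g) ⊗ h₍₁₎) ⊗ α(h₍₂₎) = β(θ(g₍₂₎ ⊗ α⁻¹(h))₍₀₎) ⊗ g₍₁₎ θ(g₍₂₎ ⊗ α⁻¹(h))₍₁₎`. -/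
  cond1 : ∀ g h : H,
    TensorProduct.map θ Hh.aut.toLinearMap
        ((TensorProduct.assoc k H H H).symm (Hh.aut.symm g ⊗ₜ[k] Hh.comul h))
      = TensorProduct.lift
          ((TensorProduct.homTensorHomMap (RingHom.id k) A H A H).comp
            (((TensorProduct.mk k (A →ₗ[k] A) (H →ₗ[k] H)) AA.aut.toLinearMap).comp Hh.mul))
          (TensorProduct.map LinearMap.id
            (AA.coact.comp (θ.comp ((TensorProduct.mk k H H).flip (Hh.aut.symm h))))
            (Hh.comul g))
  /-- `θ(h₍₁₎ ⊗ h₍₂₎) = ε(h) 1_A`. -/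
  cond2 : ∀ h : H, θ (Hh.comul h) = Hh.counit h • AA.one
  /-- `β²(a₍₀₎₍₀₎) θ(α⁻¹(g) a₍₀₎₍₁₎ ⊗ α⁻¹(h) α⁻¹(a₍₁₎)) = θ(g ⊗ h) a`. -/
  cond3 : ∀ (g h : H) (a : A),
    TensorProduct.lift AA.mul
      (TensorProduct.map (AA.aut.toLinearMap.comp AA.aut.toLinearMap)
          (θ.comp (TensorProduct.map (Hh.mul (Hh.aut.symm g)) (Hh.mul (Hh.aut.symm h))))
        (TensorProduct.assoc k A H H
          (TensorProduct.map AA.coact Hh.aut.symm.toLinearMap (AA.coact a))))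
      = AA.mul (θ (g ⊗ₜ[k] h)) a

/-- The map `ν_M : M ⊗ H → M`, `ν_M(m ⊗ h) = μ(m₍₀₎) · θ(m₍₁₎ ⊗ α⁻¹(h))`. -/
def nuMap {M : Type u} [AddCommGroup M] [Module k M]
    {Hh : HomHopfAlgebra k H} {AA : HomComoduleAlgebra k Hh A}
    (θ : H ⊗[k] H →ₗ[k] A) (T : RelHopfModule k Hh AA M) : M ⊗[k] H →ₗ[k] M :=
  (TensorProduct.lift T.act).comp
    ((TensorProduct.map T.aut.toLinearMap
        (θ.comp (TensorProduct.map LinearMap.id Hh.aut.symm.toLinearMap))).comp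
      (((TensorProduct.assoc k M H H).toLinearMap).comp
        (TensorProduct.map T.coact LinearMap.id)))

/-- The `(A, β)`-action on `M ⊗ A`: `(m ⊗ a) · b = μ⁻¹(m) ⊗ a β(b)`. -/
def MAact {M : Type u} [AddCommGroup M] [Module k M]
    {Hh : HomHopfAlgebra k H} (AA : HomComoduleAlgebra k Hh A)
    (autM : M ≃ₗ[k] M) : (M ⊗[k] A) →ₗ[k] A →ₗ[k] (M ⊗[k] A) :=
  (((TensorProduct.homTensorHomMap (RingHom.id k) M A M A).comp
    (((((TensorProduct.mk k (M →ₗ[k] M) (A →ₗ[k] A)) autM.symm.toLinearMap).comp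
      AA.mul.flip).comp AA.aut.toLinearMap)))).flip

/-- The `(H, α)`-coaction on `M ⊗ A`: `ρ(m ⊗ a) = (m₍₀₎ ⊗ a₍₀₎) ⊗ m₍₁₎ a₍₁₎`. -/
def MAcoact {M : Type u} [AddCommGroup M] [Module k M]
    (Hh : HomHopfAlgebra k H) (AA : HomComoduleAlgebra k Hh A)
    (coactM : M →ₗ[k] M ⊗[k] H) : (M ⊗[k] A) →ₗ[k] (M ⊗[k] A) ⊗[k] H :=
  (TensorProduct.map LinearMap.id (TensorProduct.lift Hh.mul)).comp
    ((TensorProduct.tensorTensorTensorComm k M H A H).toLinearMap.comp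
      (TensorProduct.map coactM AA.coact))

/-- The map `ξ : H ⊗ A → A ⊗ H`, `ξ(h ⊗ a) = β(a₍₀₎) ⊗ α⁻¹(h) a₍₁₎`. -/
def xiMap (Hh : HomHopfAlgebra k H) (AA : HomComoduleAlgebra k Hh A) :
    H ⊗[k] A →ₗ[k] A ⊗[k] H :=
  (TensorProduct.lift ((TensorProduct.homTensorHomMap (RingHom.id k) A H A H).comp
      (((((TensorProduct.mk k (A →ₗ[k] A) (H →ₗ[k] H)) AA.aut.toLinearMap).comp
        Hh.mul).comp Hh.aut.symm.toLinearMap)))).comp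
    (TensorProduct.map LinearMap.id AA.coact)

/-- Morphisms of right `(A, β)`-Hom-modules. -/
def IsHomModuleHom {M N : Type u} [AddCommGroup M] [Module k M] [AddCommGroup N] [Module k N]
    {Aa : HomAlgebra k A} (Mm : HomModule k Aa M) (Nn : HomModule k Aa N)
    (f : M →ₗ[k] N) : Prop :=
  (∀ m, f (Mm.aut m) = Nn.aut (f m)) ∧ ∀ m a, f (Mm.act m a) = Nn.act (f m) a

/-- Morphisms of right `(H, α)`-Hom-comodules. -/
def IsHomComoduleHom {M N : Type u} [AddCommGroup M] [Module k M] [AddCommGroup N] [Module k N]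
    {Hh : HomHopfAlgebra k H} (Mm : HomComodule k Hh M) (Nn : HomComodule k Hh N)
    (f : M →ₗ[k] N) : Prop :=
  (∀ m, f (Mm.aut m) = Nn.aut (f m)) ∧
    Nn.coact.comp f = (TensorProduct.map f LinearMap.id).comp Mm.coact

/-- Morphisms of relative Hom-Hopf modules. -/
def IsRelHopfHom {M N : Type u} [AddCommGroup M] [Module k M] [AddCommGroup N] [Module k N]
    {Hh : HomHopfAlgebra k H} {AA : HomComoduleAlgebra k Hh A}
    (Mm : RelHopfModule k Hh AA M) (Nn : RelHopfModule k Hh AA N)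
    (f : M →ₗ[k] N) : Prop :=
  (∀ m, f (Mm.aut m) = Nn.aut (f m)) ∧
    (∀ m a, f (Mm.act m a) = Nn.act (f m) a) ∧
    Nn.coact.comp f = (TensorProduct.map f LinearMap.id).comp Mm.coact

end

noncomputable section Aux

open TensorProduct

variable {k : Type v} [CommRing k]

@[simp] lemma biTensor_tmul {M₁ N₁ P₁ Q₁ R₁ S₁ : Type*}
    [AddCommGroup M₁] [Module k M₁] [AddCommGroup N₁] [Module k N₁]
    [AddCommGroup P₁] [Module k P₁] [AddCommGroup Q₁] [Module k Q₁]
    [AddCommGroup R₁] [Module k R₁] [AddCommGroup S₁] [Module k S₁]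
    (f : M₁ →ₗ[k] P₁ →ₗ[k] R₁) (g : N₁ →ₗ[k] Q₁ →ₗ[k] S₁) (m : M₁) (n : N₁) :
    biTensor f g (m ⊗ₜ[k] n) = TensorProduct.map (f m) (g n) := by
  simp [biTensor]

lemma map_symm_map {M₁ N₁ : Type*}
    [AddCommGroup M₁] [Module k M₁] [AddCommGroup N₁] [Module k N₁]
    (e₁ : M₁ ≃ₗ[k] M₁) (e₂ : N₁ ≃ₗ[k] N₁) (x : M₁ ⊗[k] N₁) :
    TensorProduct.map e₁.symm.toLinearMap e₂.symm.toLinearMap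
      (TensorProduct.map e₁.toLinearMap e₂.toLinearMap x) = x := by
  have : TensorProduct.map e₁.symm.toLinearMap e₂.symm.toLinearMap
      (TensorProduct.map e₁.toLinearMap e₂.toLinearMap x)
      = ((TensorProduct.map e₁.symm.toLinearMap e₂.symm.toLinearMap).comp
          (TensorProduct.map e₁.toLinearMap e₂.toLinearMap)) x := rfl
  rw [this, ← TensorProduct.map_comp]
  simp [TensorProduct.map_id]

variable {H A : Type u}
  [AddCommGroup H] [Module k H] [AddCommGroup A] [Module k A]
  {Hh : HomHopfAlgebra k H} {AA : HomComoduleAlgebra k Hh A}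
  {M : Type u} [AddCommGroup M] [Module k M]

/-- `(p ⊗ q) ↦ μ(p) · θ(q ⊗ α⁻¹ h)`. -/
def nuCore (θ : H ⊗[k] H →ₗ[k] A) (T : RelHopfModule k Hh AA M) (h : H) :
    M ⊗[k] H →ₗ[k] M :=
  TensorProduct.lift ((T.act.comp T.aut.toLinearMap).compl₂
    (θ.comp ((TensorProduct.mk k H H).flip (Hh.aut.symm h))))

@[simp] lemma nuCore_tmul (θ : H ⊗[k] H →ₗ[k] A) (T : RelHopfModule k Hh AA M)
    (h : H) (p : M) (q : H) :
    nuCore θ T h (p ⊗ₜ[k] q) = T.act (T.aut p) (θ (q ⊗ₜ[k] Hh.aut.symm h)) := by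
  simp [nuCore]

lemma nuMap_tmul (θ : H ⊗[k] H →ₗ[k] A) (T : RelHopfModule k Hh AA M) (m : M) (h : H) :
    nuMap θ T (m ⊗ₜ[k] h) = nuCore θ T h (T.coact m) := by
  rw [nuMap]
  simp only [LinearMap.comp_apply, TensorProduct.map_tmul, LinearMap.id_coe, id_eq,
    LinearEquiv.coe_coe]
  generalize T.coact m = t
  induction t using TensorProduct.induction_on with
  | zero => simp
  | tmul p q => simp
  | add x y hx hy =>
      simp only [TensorProduct.add_tmul, map_add, hx, hy]

lemma coact_aut_symm (T : RelHopfModule k Hh AA M) (m : M) :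
    T.coact (T.aut.symm m)
      = TensorProduct.map T.aut.symm.toLinearMap Hh.aut.symm.toLinearMap (T.coact m) := by
  have h := T.coact_aut (T.aut.symm m)
  rw [T.aut.apply_symm_apply] at h
  rw [h, map_symm_map]

lemma AAcoact_aut_symm (a : A) :
    AA.coact (AA.aut.symm a)
      = TensorProduct.map AA.aut.symm.toLinearMap Hh.aut.symm.toLinearMap (AA.coact a) := by
  have h := AA.coact_aut (AA.aut.symm a)
  rw [AA.aut.apply_symm_apply] at h
  rw [h, map_symm_map]

lemma comul_aut_symm (h : H) :
    Hh.comul (Hh.aut.symm h)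
      = TensorProduct.map Hh.aut.symm.toLinearMap Hh.aut.symm.toLinearMap (Hh.comul h) := by
  have hh := Hh.comul_aut (Hh.aut.symm h)
  rw [Hh.aut.apply_symm_apply] at hh
  rw [hh, map_symm_map]

lemma theta_aut (Θ : NormalizedIntegral k Hh AA) (g h : H) :
    Θ.θ (Hh.aut g ⊗ₜ[k] Hh.aut h) = AA.aut (Θ.θ (g ⊗ₜ[k] h)) := by
  simpa using Θ.commutes (g ⊗ₜ[k] h)

lemma aut_symm_mul {B : Type u} [AddCommGroup B] [Module k B]
    (Ba : HomAlgebra k B) (a b : B) :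
    Ba.aut.symm (Ba.mul a b) = Ba.mul (Ba.aut.symm a) (Ba.aut.symm b) := by
  apply Ba.aut.injective
  rw [Ba.aut.apply_symm_apply, Ba.aut_mul]
  simp

/-- `p ⊗ (q ⊗ r) ↦ μ(p) · θ(q ⊗ r)`. -/
def psiMap (θ : H ⊗[k] H →ₗ[k] A) (T : RelHopfModule k Hh AA M) :
    M ⊗[k] (H ⊗[k] H) →ₗ[k] M :=
  TensorProduct.lift ((T.act.comp T.aut.toLinearMap).compl₂ θ)

@[simp] lemma psiMap_tmul (θ : H ⊗[k] H →ₗ[k] A) (T : RelHopfModule k Hh AA M)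
    (p : M) (w : H ⊗[k] H) :
    psiMap θ T (p ⊗ₜ[k] w) = T.act (T.aut p) (θ w) := by
  simp [psiMap]

lemma nuMap_eq_psi (θ : H ⊗[k] H →ₗ[k] A) (T : RelHopfModule k Hh AA M) (t : M ⊗[k] H) :
    nuMap θ T t = psiMap θ T (TensorProduct.assoc k M H H
      (TensorProduct.map T.coact Hh.aut.symm.toLinearMap t)) := by
  induction t using TensorProduct.induction_on with
  | zero => simp
  | add x y hx hy => simp only [map_add, hx, hy]
  | tmul m h =>
    rw [nuMap_tmul]
    simp only [TensorProduct.map_tmul, LinearEquiv.coe_coe]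
    generalize T.coact m = t
    induction t using TensorProduct.induction_on with
    | zero => simp
    | add x y hx hy =>
        simp only [TensorProduct.add_tmul, map_add, hx, hy]
    | tmul p q => simp

lemma Hmul_symm (a b : H) :
    Hh.aut.symm (Hh.mul a b) = Hh.mul (Hh.aut.symm a) (Hh.aut.symm b) := by
  apply Hh.aut.injective
  rw [Hh.aut.apply_symm_apply, Hh.aut_mul]
  simp

/-- The composite appearing on the left of `cond3`, as a linear map of `ρ_A(a)`. -/
def cThree (Θ : NormalizedIntegral k Hh AA) (q h' : H) : A ⊗[k] H →ₗ[k] A :=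
  (TensorProduct.lift AA.mul).comp
    ((TensorProduct.map (AA.aut.toLinearMap.comp AA.aut.toLinearMap)
        (Θ.θ.comp (TensorProduct.map (Hh.mul (Hh.aut.symm q)) (Hh.mul (Hh.aut.symm h'))))).comp
      (((TensorProduct.assoc k A H H).toLinearMap).comp
        ((TensorProduct.map AA.coact Hh.aut.symm.toLinearMap).comp
          (TensorProduct.map AA.aut.symm.toLinearMap Hh.aut.symm.toLinearMap))))

lemma cond3' (Θ : NormalizedIntegral k Hh AA) (q h' : H) (a : A) :
    cThree Θ q h' (AA.coact a) = AA.mul (Θ.θ (q ⊗ₜ[k] h')) (AA.aut.symm a) := by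
  have h3 := Θ.cond3 q h' (AA.aut.symm a)
  rw [AAcoact_aut_symm] at h3
  simpa [cThree] using h3

lemma core_ii (Θ : NormalizedIntegral k Hh AA) (T : RelHopfModule k Hh AA M)
    (p : M) (q h y v : H) (u : A) :
    T.act (T.aut (T.act p u)) (Θ.θ (Hh.mul q v ⊗ₜ[k] Hh.aut.symm (Hh.mul h y)))
      = T.act (T.aut (T.aut p))
          (AA.mul (AA.aut u)
            (Θ.θ (Hh.mul (Hh.aut.symm q) (Hh.aut.symm v)
              ⊗ₜ[k] Hh.mul (Hh.aut.symm (Hh.aut.symm h)) (Hh.aut.symm (Hh.aut.symm y))))) := by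
  rw [T.aut_act, ← Hmul_symm, ← Hmul_symm, ← Hmul_symm, ← T.act_act]
  congr 1
  rw [← theta_aut]
  simp

/-- `u ⊗ (v ⊗ w) ↦ (μ(u) ⊗ α(v)) acting-mulled with `ρ_A(θ(α(w) ⊗ α⁻¹(h)))`. -/
def lamIII (Θ : NormalizedIntegral k Hh AA) (T : RelHopfModule k Hh AA M) (h : H) :
    M ⊗[k] (H ⊗[k] H) →ₗ[k] M ⊗[k] H :=
  (TensorProduct.lift (biTensor T.act Hh.mul)).comp
    (((TensorProduct.assoc k M H (A ⊗[k] H)).symm.toLinearMap).comp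
      (TensorProduct.map T.aut.toLinearMap
        (TensorProduct.map Hh.aut.toLinearMap
          (AA.coact.comp (Θ.θ.comp ((((TensorProduct.mk k H H).flip (Hh.aut.symm h)).comp
            Hh.aut.toLinearMap)))))))

@[simp] lemma lamIII_tmul (Θ : NormalizedIntegral k Hh AA) (T : RelHopfModule k Hh AA M)
    (h : H) (u : M) (v w : H) :
    lamIII Θ T h (u ⊗ₜ[k] (v ⊗ₜ[k] w))
      = TensorProduct.map (T.act (T.aut u)) (Hh.mul (Hh.aut v))
          (AA.coact (Θ.θ (Hh.aut w ⊗ₜ[k] Hh.aut.symm h))) := by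
  simp [lamIII, TensorProduct.assoc_symm_tmul]

lemma lamIII_comul (Θ : NormalizedIntegral k Hh AA) (T : RelHopfModule k Hh AA M)
    (h : H) (p : M) (q : H) :
    lamIII Θ T h (T.aut.symm p ⊗ₜ[k] Hh.comul q)
      = TensorProduct.map (T.act p) Hh.aut.toLinearMap
          (TensorProduct.lift ((TensorProduct.homTensorHomMap (RingHom.id k) A H A H).comp
              (((TensorProduct.mk k (A →ₗ[k] A) (H →ₗ[k] H)) AA.aut.toLinearMap).comp Hh.mul))
            (TensorProduct.map LinearMap.id
              (AA.coact.comp (Θ.θ.comp ((TensorProduct.mk k H H).flip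
                (Hh.aut.symm (Hh.aut.symm h)))))
              (Hh.comul q))) := by
  generalize Hh.comul q = s
  induction s using TensorProduct.induction_on with
  | zero => simp
  | add w z hw hz => simp only [map_add, TensorProduct.tmul_add, hw, hz]
  | tmul v w =>
    rw [lamIII_tmul]
    have hθ : Θ.θ (Hh.aut w ⊗ₜ[k] Hh.aut.symm h)
        = AA.aut (Θ.θ (w ⊗ₜ[k] Hh.aut.symm (Hh.aut.symm h))) := by
      conv_lhs => rw [show Hh.aut.symm h = Hh.aut (Hh.aut.symm (Hh.aut.symm h)) from
        (Hh.aut.apply_symm_apply _).symm]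
      exact theta_aut Θ w _
    rw [hθ, AA.coact_aut]
    simp only [TensorProduct.map_tmul, LinearMap.id_coe, id_eq, LinearMap.comp_apply,
      TensorProduct.mk_apply, LinearMap.flip_apply, TensorProduct.lift.tmul,
      TensorProduct.homTensorHomMap_apply, LinearEquiv.coe_coe, LinearEquiv.apply_symm_apply]
    generalize AA.coact (Θ.θ (w ⊗ₜ[k] Hh.aut.symm (Hh.aut.symm h))) = t
    induction t using TensorProduct.induction_on with
    | zero => simp
    | add w' z' hw hz => simp only [map_add, hw, hz]
    | tmul x0 x1 =>
      simp only [TensorProduct.map_tmul, LinearEquiv.coe_coe]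
      rw [Hh.aut_mul]

end Aux

section Statements

variable {k : Type v} [CommRing k] {H A : Type u}
  [AddCommGroup H] [Module k H] [AddCommGroup A] [Module k A]

/-- For a normalized `(A,β)`-integral `θ` and a relative Hom-Hopf module
`(M,μ)`, the map `ν_M(m⊗h) = μ(m₍₀₎)·θ(m₍₁₎ ⊗ α⁻¹(h))` commutes with the automorphisms,
is right `(A,β)`-linear and right `(H,α)`-colinear (for the `G`-structures on `M ⊗ H`),
is a retraction of `ρ_M`, and is natural in `M`. -/
theorem nu_is_natural_relHopf_retraction
    {M N : Type u} [AddCommGroup M] [Module k M] [AddCommGroup N] [Module k N]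
    (Hh : HomHopfAlgebra k H) (AA : HomComoduleAlgebra k Hh A)
    (Θ : NormalizedIntegral k Hh AA)
    (Mm : RelHopfModule k Hh AA M) (Nn : RelHopfModule k Hh AA N) :
    -- (i) compatibility with the automorphisms
    (∀ x, nuMap Θ.θ Mm (TensorProduct.congr Mm.aut Hh.aut x) = Mm.aut (nuMap Θ.θ Mm x)) ∧
    -- (ii) right (A,β)-linearity
    (∀ x a, nuMap Θ.θ Mm (Gact Hh AA Mm.act x a) = Mm.act (nuMap Θ.θ Mm x) a) ∧
    -- (iii) right (H,α)-colinearity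
    (Mm.coact.comp (nuMap Θ.θ Mm)
        = (TensorProduct.map (nuMap Θ.θ Mm) LinearMap.id).comp (Gcoact Hh Mm.aut)) ∧
    -- (iv) retraction of the coaction
    ((nuMap Θ.θ Mm).comp Mm.coact = LinearMap.id) ∧
    -- (v) naturality
    (∀ f : M →ₗ[k] N, IsRelHopfHom Mm Nn f →
        (nuMap Θ.θ Nn).comp (TensorProduct.map f LinearMap.id) = f.comp (nuMap Θ.θ Mm)) := by
  refine ⟨?_, ?_, ?_, ?_, ?_⟩
  · -- (i)
    intro x
    induction x using TensorProduct.induction_on with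
    | zero => simp
    | add x y hx hy => simp only [map_add, hx, hy]
    | tmul m h =>
      rw [TensorProduct.congr_tmul, nuMap_tmul, nuMap_tmul, Mm.coact_aut]
      generalize Mm.coact m = t
      induction t using TensorProduct.induction_on with
      | zero => simp
      | add x y hx hy => simp only [map_add, hx, hy]
      | tmul p q =>
        simp only [TensorProduct.map_tmul, nuCore_tmul, LinearEquiv.coe_coe]
        rw [Mm.aut_act, ← theta_aut]
        simp
  · -- (ii)
    intro x a
    induction x using TensorProduct.induction_on with
    | zero => simp
    | add x y hx hy => simp only [map_add, LinearMap.add_apply, hx, hy]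
    | tmul m h =>
      obtain ⟨Sm, hSm⟩ := TensorProduct.exists_finset (Mm.coact m)
      obtain ⟨Sa, hSa⟩ := TensorProduct.exists_finset (AA.coact a)
      have hG : Gact Hh AA Mm.act (m ⊗ₜ[k] h) a
          = TensorProduct.map (Mm.act m) (Hh.mul h) (AA.coact a) := by
        simp [Gact, LinearMap.compl₂_apply, biTensor_tmul]
      have hRHS : Mm.act (nuMap Θ.θ Mm (m ⊗ₜ[k] h)) a
          = ∑ i ∈ Sm, ∑ j ∈ Sa, Mm.act (Mm.aut (Mm.aut i.1))
              (cThree Θ i.2 (Hh.aut.symm h) (j.1 ⊗ₜ[k] j.2)) := by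
        rw [nuMap_tmul, hSm, map_sum, map_sum, LinearMap.sum_apply]
        refine Finset.sum_congr rfl ?_
        rintro ⟨p, q⟩ -
        rw [nuCore_tmul]
        conv_lhs => rw [show a = AA.aut (AA.aut.symm a) from (AA.aut.apply_symm_apply a).symm]
        rw [Mm.act_act, ← cond3' Θ q (Hh.aut.symm h) a, hSa, map_sum, map_sum]
      have hLHS : nuMap Θ.θ Mm (Gact Hh AA Mm.act (m ⊗ₜ[k] h) a)
          = ∑ j ∈ Sa, ∑ i ∈ Sm, nuCore Θ.θ Mm (Hh.mul h j.2)
              (TensorProduct.map (Mm.act i.1) (Hh.mul i.2) (AA.coact j.1)) := by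
        rw [hG, hSa, map_sum, map_sum]
        refine Finset.sum_congr rfl ?_
        rintro ⟨x2, y2⟩ -
        rw [TensorProduct.map_tmul, nuMap_tmul, Mm.compat, hSm]
        simp only [map_sum, LinearMap.sum_apply, biTensor_tmul]
      rw [hLHS, hRHS, Finset.sum_comm]
      refine Finset.sum_congr rfl ?_
      rintro ⟨p, q⟩ -
      refine Finset.sum_congr rfl ?_
      rintro ⟨x2, y2⟩ -
      rw [cThree]
      simp only [LinearMap.comp_apply, TensorProduct.map_tmul, LinearEquiv.coe_coe]
      rw [AAcoact_aut_symm]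
      generalize AA.coact x2 = t
      induction t using TensorProduct.induction_on with
      | zero => simp
      | add w z hw hz =>
          simp only [map_add, TensorProduct.add_tmul, LinearMap.add_apply, hw, hz]
      | tmul u v =>
        simp only [TensorProduct.map_tmul, TensorProduct.assoc_tmul, LinearEquiv.coe_coe,
          TensorProduct.lift.tmul, LinearMap.comp_apply, LinearEquiv.apply_symm_apply,
          LinearEquiv.trans_apply, nuCore_tmul]
        exact core_ii Θ Mm p q h y2 v u
  · -- (iii)
    apply TensorProduct.ext'
    intro m h
    simp only [LinearMap.comp_apply]
    obtain ⟨Sm, hSm⟩ := TensorProduct.exists_finset (Mm.coact m)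
    have step1 : Mm.coact (nuMap Θ.θ Mm (m ⊗ₜ[k] h))
        = ∑ i ∈ Sm, lamIII Θ Mm h
            ((TensorProduct.assoc k M H H) (Mm.coact i.1 ⊗ₜ[k] Hh.aut.symm i.2)) := by
      rw [nuMap_tmul, hSm, map_sum, map_sum]
      refine Finset.sum_congr rfl ?_
      rintro ⟨p, q⟩ -
      rw [nuCore_tmul, Mm.compat, Mm.coact_aut]
      generalize Mm.coact p = t
      induction t using TensorProduct.induction_on with
      | zero => simp
      | add w z hw hz =>
          simp only [map_add, TensorProduct.add_tmul, LinearMap.add_apply, hw, hz]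
      | tmul p0 p1 =>
        rw [TensorProduct.map_tmul, biTensor_tmul, TensorProduct.assoc_tmul, lamIII_tmul]
        simp
    have hco : ∑ i ∈ Sm, (TensorProduct.assoc k M H H)
          (Mm.coact i.1 ⊗ₜ[k] Hh.aut.symm i.2)
        = ∑ i ∈ Sm, Mm.aut.symm i.1 ⊗ₜ[k] Hh.comul i.2 := by
      have h0 := Mm.hom_coassoc m
      rw [hSm] at h0
      simpa only [map_sum, TensorProduct.map_tmul, LinearEquiv.coe_coe] using h0
    have step3 : TensorProduct.map (nuMap Θ.θ Mm) LinearMap.id (Gcoact Hh Mm.aut (m ⊗ₜ[k] h))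
        = ∑ i ∈ Sm, TensorProduct.map (Mm.act i.1) Hh.aut.toLinearMap
            (TensorProduct.map Θ.θ Hh.aut.toLinearMap
              ((TensorProduct.assoc k H H H).symm
                (Hh.aut.symm i.2 ⊗ₜ[k] Hh.comul (Hh.aut.symm h)))) := by
      rw [Gcoact]
      simp only [LinearMap.comp_apply, TensorProduct.map_tmul, LinearEquiv.coe_coe,
        LinearMap.id_coe, id_eq]
      rw [comul_aut_symm]
      generalize Hh.comul h = r
      induction r using TensorProduct.induction_on with
      | zero => simp
      | add w z hw hz =>
          simp only [map_add, TensorProduct.tmul_add, hw, hz, Finset.sum_add_distrib]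
      | tmul h1 h2 =>
        rw [TensorProduct.map_tmul]
        simp only [LinearMap.id_coe, id_eq, LinearEquiv.coe_coe]
        rw [TensorProduct.assoc_symm_tmul, TensorProduct.map_tmul, nuMap_tmul,
          coact_aut_symm Mm, hSm]
        simp only [map_sum, TensorProduct.map_tmul, LinearEquiv.coe_coe, nuCore_tmul,
          LinearEquiv.apply_symm_apply, TensorProduct.sum_tmul]
        refine Finset.sum_congr rfl ?_
        rintro ⟨p, q⟩ -
        simp [TensorProduct.assoc_symm_tmul]
    rw [step1, step3, ← map_sum, hco, map_sum]
    refine Finset.sum_congr rfl ?_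
    rintro ⟨p, q⟩ -
    rw [lamIII_comul Θ Mm h p q]
    exact congrArg _ (Θ.cond1 q (Hh.aut.symm h)).symm
  · -- (iv)
    apply LinearMap.ext
    intro m
    simp only [LinearMap.comp_apply, LinearMap.id_coe, id_eq]
    rw [nuMap_eq_psi, Mm.hom_coassoc m]
    have key : (psiMap Θ.θ Mm).comp
        (TensorProduct.map Mm.aut.symm.toLinearMap Hh.comul)
        = (Mm.aut.toLinearMap.comp ((TensorProduct.rid k M).toLinearMap.comp
            (TensorProduct.map LinearMap.id Hh.counit))) := by
      apply TensorProduct.ext'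
      intro p q
      simp only [LinearMap.comp_apply, TensorProduct.map_tmul, LinearEquiv.coe_coe,
        psiMap_tmul, LinearMap.id_coe, id_eq, TensorProduct.rid_tmul, map_smul]
      rw [Mm.aut.apply_symm_apply, Θ.cond2, map_smul, Mm.act_one]
    have := congrFun (congrArg DFunLike.coe key) (Mm.coact m)
    simp only [LinearMap.comp_apply] at this
    rw [this]
    simp only [LinearEquiv.coe_coe] at this ⊢
    rw [Mm.counit_coact m]
    simp
  · -- (v)
    intro f hf
    obtain ⟨hf1, hf2, hf3⟩ := hf
    apply TensorProduct.ext'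
    intro m h
    simp only [LinearMap.comp_apply, TensorProduct.map_tmul, LinearMap.id_coe, id_eq]
    rw [nuMap_tmul, nuMap_tmul]
    have : Nn.coact (f m) = TensorProduct.map f LinearMap.id (Mm.coact m) :=
      congrFun (congrArg DFunLike.coe hf3) m
    rw [this]
    generalize Mm.coact m = t
    induction t using TensorProduct.induction_on with
    | zero => simp
    | add x y hx hy => simp only [map_add, hx, hy]
    | tmul p q =>
      simp only [TensorProduct.map_tmul, nuCore_tmul, LinearMap.id_coe, id_eq]
      rw [hf2, hf1]

end Statements
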